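/- Representation of placement higher-order derivatives (Piola's conjecture, proved by induction): for every natural number n ≥ 2 there exists a function M_n, defined on tuples consisting of a 3×3 matrix together with the values of the iterated derivatives of order 1 through n−1 of a 3×3-matrix-valued map on ℝ³, and taking values in arrays indexed by (γ, α₁, …, α_n) ∈ {1,2,3}^{n+1}, such that for EVERY C^∞ map χ : ℝ³ → ℝ³ whose Jacobian F(X) is invertible at every point, and for every X ∈ ℝ³ and all indices γ, α₁, …, α_n ∈ {1,2,3}, one has Σ_{i=1}^{3} (∂χ^i/∂X^γ)(X) · (∂ⁿχ^i/∂X^{α₁}⋯∂X^{α_n})(X) = M_n( C(X), (∇C)(X), …, (∇^{n−1}C)(X) )_{γ α₁⋯α_n}. In other words, all the contracted n-th order derivatives F(X)ᵀ·∇ⁿχ(X) are expressed through the Cauchy–Green tensor C and its space derivatives up to order n−1 at the point X, by a formula independent of χ. -/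

import Mathlib

open scoped ContDiff
open Matrix

/-- Partial derivative of a scalar field on ℝ³ in the coordinate direction `α`. -/
noncomputable def pd (f : (Fin 3 → ℝ) → ℝ) (α : Fin 3) : (Fin 3 → ℝ) → ℝ :=
  fun X => fderiv ℝ f X (Pi.single α 1)

lemma clm_fderiv_apply {E F G : Type*} [NormedAddCommGroup E] [NormedSpace ℝ E]
    [NormedAddCommGroup F] [NormedSpace ℝ F] [NormedAddCommGroup G] [NormedSpace ℝ G]
    (L : F →L[ℝ] G) {f : E → F} {x : E} (hf : DifferentiableAt ℝ f x) (v : E) :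
    fderiv ℝ (fun y => L (f y)) x v = L (fderiv ℝ f x v) := by
  rw [show (fun y => L (f y)) = L ∘ f from rfl, fderiv_comp x L.differentiableAt hf]
  simp

noncomputable def Pn : (n : ℕ) → (Fin n → Fin 3) → ((Fin 3 → ℝ) → ℝ) → ((Fin 3 → ℝ) → ℝ)
  | 0, _, f => f
  | (n+1), m, f => pd (Pn n (Fin.tail m) f) (m 0)

lemma pd_contDiff {f : (Fin 3 → ℝ) → ℝ} (hf : ContDiff ℝ ∞ f) (α : Fin 3) :
    ContDiff ℝ ∞ (pd f α) :=
  (ContinuousLinearMap.apply ℝ ℝ (Pi.single α 1 : Fin 3 → ℝ)).contDiff.comp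
    (hf.fderiv_right (le_refl _))

lemma Pn_contDiff {f : (Fin 3 → ℝ) → ℝ} (hf : ContDiff ℝ ∞ f) :
    ∀ (n : ℕ) (m : Fin n → Fin 3), ContDiff ℝ ∞ (Pn n m f)
  | 0, _ => hf
  | (n+1), m => pd_contDiff (Pn_contDiff hf n (Fin.tail m)) (m 0)

lemma iteratedFDeriv_basis {f : (Fin 3 → ℝ) → ℝ} (hf : ContDiff ℝ ∞ f) :
    ∀ (n : ℕ) (m : Fin n → Fin 3) (X : Fin 3 → ℝ),
      iteratedFDeriv ℝ n f X (fun k => Pi.single (m k) 1) = Pn n m f X := by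
  intro n
  induction n with
  | zero => intro m X; simp [Pn]
  | succ n ih =>
    intro m X
    rw [iteratedFDeriv_succ_apply_left]
    have hdi : Differentiable ℝ (iteratedFDeriv ℝ n f) :=
      hf.differentiable_iteratedFDeriv (by exact_mod_cast lt_top_iff_ne_top.2 (by simp))
    set bs : Fin (n+1) → Fin 3 → ℝ := fun k => Pi.single (m k) 1 with hbs
    have h1 : (fderiv ℝ (iteratedFDeriv ℝ n f) X (Pi.single (m 0) 1))
          (Fin.tail bs)
        = fderiv ℝ (fun Y => iteratedFDeriv ℝ n f Y (Fin.tail bs))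
            X (Pi.single (m 0) 1) := by
      exact (clm_fderiv_apply (ContinuousMultilinearMap.apply ℝ (fun _ : Fin n => (Fin 3 → ℝ)) ℝ
        (Fin.tail bs)) (hdi X) (Pi.single (m 0) 1)).symm
    rw [h1]
    have h2 : (fun Y => iteratedFDeriv ℝ n f Y (Fin.tail bs))
        = Pn n (Fin.tail m) f := by
      funext Y
      have h3 : Fin.tail bs = fun k => Pi.single (Fin.tail m k) 1 := rfl
      rw [h3, ih]
    rw [h2]
    rfl

-- pd rules
lemma pd_congr {f g : (Fin 3 → ℝ) → ℝ} (h : ∀ X, f X = g X) (α : Fin 3) :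
    pd f α = pd g α := by
  have : f = g := funext h
  rw [this]

lemma pd_sum {ι : Type*} (s : Finset ι) {X : Fin 3 → ℝ} {f : ι → (Fin 3 → ℝ) → ℝ}
    (hf : ∀ i ∈ s, DifferentiableAt ℝ (f i) X) (α : Fin 3) :
    pd (fun Y => ∑ i ∈ s, f i Y) α X = ∑ i ∈ s, pd (f i) α X := by
  unfold pd
  rw [fderiv_fun_sum hf]
  simp

lemma pd_mul {f g : (Fin 3 → ℝ) → ℝ} {X : Fin 3 → ℝ} (hf : DifferentiableAt ℝ f X)
    (hg : DifferentiableAt ℝ g X) (α : Fin 3) :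
    pd (fun Y => f Y * g Y) α X = pd f α X * g X + f X * pd g α X := by
  unfold pd
  rw [fderiv_fun_mul hf hg]
  simp
  ring

-- second derivative symmetry
lemma pd_comm {f : (Fin 3 → ℝ) → ℝ} (hf : ContDiff ℝ ∞ f) (α β : Fin 3) (X : Fin 3 → ℝ) :
    pd (pd f α) β X = pd (pd f β) α X := by
  have hdf : Differentiable ℝ f := hf.differentiable (by simp)
  have hdf2 : DifferentiableAt ℝ (fderiv ℝ f) X :=
    ((hf.fderiv_right (m := ∞) (le_refl _)).differentiable (by simp)) X
  have key : ∀ (v w : Fin 3 → ℝ),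
      fderiv ℝ (fderiv ℝ f) X v w = fderiv ℝ (fderiv ℝ f) X w v := by
    intro v w
    exact second_derivative_symmetric (fun y => (hdf y).hasFDerivAt) hdf2.hasFDerivAt v w
  have h1 : ∀ (γ δ : Fin 3), pd (pd f γ) δ X
      = fderiv ℝ (fderiv ℝ f) X (Pi.single δ 1) (Pi.single γ 1) := by
    intro γ δ
    unfold pd
    exact clm_fderiv_apply (ContinuousLinearMap.apply ℝ ℝ (Pi.single γ 1 : Fin 3 → ℝ)) hdf2
      (Pi.single δ 1)
  rw [h1, h1, key]

/-- Right Cauchy–Green tensor component C_{αβ} of the placement χ, as a function of X. -/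
noncomputable def CG (χ : (Fin 3 → ℝ) → (Fin 3 → ℝ)) (α β : Fin 3) : (Fin 3 → ℝ) → ℝ :=
  fun X => ∑ i, pd (fun Y => χ Y i) α X * pd (fun Y => χ Y i) β X

/-- The deformation gradient F(X), with entries F^i_α = ∂χ^i/∂X^α, as a matrix. -/
noncomputable def Fgrad (χ : (Fin 3 → ℝ) → (Fin 3 → ℝ)) (X : Fin 3 → ℝ) :
    Matrix (Fin 3) (Fin 3) ℝ :=
  Matrix.of fun i α => pd (fun Y => χ Y i) α X

/-- The Cauchy–Green tensor as a map to `Fin 3 → Fin 3 → ℝ` (so iterated Fréchet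
derivatives make sense). -/
noncomputable def CGfun (χ : (Fin 3 → ℝ) → (Fin 3 → ℝ)) :
    (Fin 3 → ℝ) → (Fin 3 → Fin 3 → ℝ) :=
  fun X α β => CG χ α β X

lemma comp_contDiff {χ : (Fin 3 → ℝ) → (Fin 3 → ℝ)} (hχ : ContDiff ℝ ∞ χ) (i : Fin 3) :
    ContDiff ℝ ∞ (fun Y => χ Y i) :=
  (ContinuousLinearMap.proj (R := ℝ) (φ := fun _ : Fin 3 => ℝ) i).contDiff.comp hχ

lemma CG_contDiff {χ : (Fin 3 → ℝ) → (Fin 3 → ℝ)} (hχ : ContDiff ℝ ∞ χ) (α β : Fin 3) :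
    ContDiff ℝ ∞ (CG χ α β) := by
  unfold CG
  exact ContDiff.sum fun i _ =>
    (pd_contDiff (comp_contDiff hχ i) α).mul (pd_contDiff (comp_contDiff hχ i) β)

lemma CGfun_contDiff {χ : (Fin 3 → ℝ) → (Fin 3 → ℝ)} (hχ : ContDiff ℝ ∞ χ) :
    ContDiff ℝ ∞ (CGfun χ) := by
  rw [contDiff_pi]
  intro α
  rw [contDiff_pi]
  intro β
  exact CG_contDiff hχ α β

-- Koszul formula
lemma koszul {χ : (Fin 3 → ℝ) → (Fin 3 → ℝ)} (hχ : ContDiff ℝ ∞ χ) (μ β γ : Fin 3)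
    (X : Fin 3 → ℝ) :
    ∑ i, pd (fun Y => χ Y i) μ X * pd (pd (fun Y => χ Y i) γ) β X
      = (pd (CG χ γ μ) β X + pd (CG χ β μ) γ X - pd (CG χ β γ) μ X) / 2 := by
  have hd : ∀ (i : Fin 3) (a : Fin 3), DifferentiableAt ℝ (pd (fun Y => χ Y i) a) X :=
    fun i a => ((pd_contDiff (comp_contDiff hχ i) a).differentiable (by simp)) X
  have hC : ∀ (a b c : Fin 3), pd (CG χ a b) c X = ∑ i,
      (pd (pd (fun Y => χ Y i) a) c X * pd (fun Y => χ Y i) b X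
        + pd (fun Y => χ Y i) a X * pd (pd (fun Y => χ Y i) b) c X) := by
    intro a b c
    unfold CG
    rw [pd_sum (f := fun i Y => pd (fun Y => χ Y i) a Y * pd (fun Y => χ Y i) b Y) _
      (fun i _ => ((hd i a).mul (hd i b))) c]
    exact Finset.sum_congr rfl fun i _ => pd_mul (hd i a) (hd i b) c
  have e1 := hC γ μ β
  have e2 := hC β μ γ
  have e3 := hC β γ μ
  rw [e1, e2, e3, ← Finset.sum_add_distrib, ← Finset.sum_sub_distrib, Finset.sum_div]
  refine Finset.sum_congr rfl fun i _ => ?_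
  have s1 := pd_comm (comp_contDiff hχ i) γ β X
  have s2 := pd_comm (comp_contDiff hχ i) γ μ X
  have s3 := pd_comm (comp_contDiff hχ i) β μ X
  rw [← s1, ← s2, ← s3]
  ring

lemma matrix_contract (F : Matrix (Fin 3) (Fin 3) ℝ) (hF : IsUnit F) (v w : Fin 3 → ℝ) :
    ∑ i, w i * v i
      = ∑ μ, ∑ ν, (∑ i, F i μ * w i) * ((Fᵀ * F)⁻¹ μ ν) * (∑ i, F i ν * v i) := by
  have hdet : IsUnit F.det := (Matrix.isUnit_iff_isUnit_det F).1 hF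
  have hdetT : IsUnit Fᵀ.det := by rwa [Matrix.det_transpose]
  have key : F * ((Fᵀ * F)⁻¹ * Fᵀ) = 1 := by
    rw [Matrix.mul_inv_rev, mul_assoc F⁻¹ Fᵀ⁻¹ Fᵀ, Matrix.nonsing_inv_mul Fᵀ hdetT,
      mul_one, Matrix.mul_nonsing_inv F hdet]
  have h1 : ∀ x : Fin 3 → ℝ, F *ᵥ (((Fᵀ * F)⁻¹ * Fᵀ) *ᵥ x) = x := by
    intro x
    rw [Matrix.mulVec_mulVec, key, Matrix.one_mulVec]
  calc ∑ i, w i * v i = w ⬝ᵥ v := rfl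
    _ = w ⬝ᵥ (F *ᵥ (((Fᵀ * F)⁻¹ * Fᵀ) *ᵥ v)) := by rw [h1]
    _ = (w ᵥ* F) ⬝ᵥ (((Fᵀ * F)⁻¹ * Fᵀ) *ᵥ v) := by rw [Matrix.dotProduct_mulVec]
    _ = (Fᵀ *ᵥ w) ⬝ᵥ ((Fᵀ * F)⁻¹ *ᵥ (Fᵀ *ᵥ v)) := by
        rw [Matrix.mulVec_transpose, ← Matrix.mulVec_mulVec]
    _ = ∑ μ, ∑ ν, (∑ i, F i μ * w i) * ((Fᵀ * F)⁻¹ μ ν) * (∑ i, F i ν * v i) := by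
        simp only [dotProduct, Matrix.mulVec, Matrix.transpose_apply]
        refine Finset.sum_congr rfl fun μ _ => ?_
        rw [Finset.mul_sum]
        exact Finset.sum_congr rfl fun ν _ => by ring

abbrev Jet (n : ℕ) := (j : Fin n) → (Fin (j : ℕ) → Fin 3) → Fin 3 → Fin 3 → ℝ

noncomputable def jetC (χ : (Fin 3 → ℝ) → (Fin 3 → ℝ)) (n : ℕ) (X : Fin 3 → ℝ) : Jet n :=
  fun j m α β => Pn (j : ℕ) m (CG χ α β) X

def cMat {n : ℕ} (J : Jet (n + 1)) : Matrix (Fin 3) (Fin 3) ℝ :=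
  Matrix.of fun α β => J ⟨0, Nat.succ_pos n⟩ (fun i => i.elim0) α β

-- coordinate evaluation on a jet is smooth
lemma jet_eval_contDiff {n : ℕ} (j : Fin n) (m : Fin (j : ℕ) → Fin 3) (α β : Fin 3) :
    ContDiff ℝ ∞ (fun J : Jet n => J j m α β) :=
  (((ContinuousLinearMap.proj β).comp ((ContinuousLinearMap.proj α).comp
    ((ContinuousLinearMap.proj m).comp
      (ContinuousLinearMap.proj (R := ℝ)
        (φ := fun j : Fin n => (Fin (j : ℕ) → Fin 3) → Fin 3 → Fin 3 → ℝ) j)))).contDiff)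

lemma jetC_contDiff {χ : (Fin 3 → ℝ) → (Fin 3 → ℝ)} (hχ : ContDiff ℝ ∞ χ) (n : ℕ) :
    ContDiff ℝ ∞ (fun X => jetC χ n X) := by
  rw [contDiff_pi]; intro j
  rw [contDiff_pi]; intro m
  rw [contDiff_pi]; intro α
  rw [contDiff_pi]; intro β
  exact Pn_contDiff (CG_contDiff hχ α β) _ m

-- derivative of a pi-valued map, applied at vector and coordinates
lemma fderiv_pi_apply' {E : Type*} [NormedAddCommGroup E] [NormedSpace ℝ E] {ι : Type*}
    [Fintype ι] {F : ι → Type*} [∀ i, NormedAddCommGroup (F i)] [∀ i, NormedSpace ℝ (F i)]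
    {f : E → (Π i, F i)} {x : E} (h : ∀ i, DifferentiableAt ℝ (fun x => f x i) x) (v : E)
    (i : ι) : fderiv ℝ f x v i = fderiv ℝ (fun x => f x i) x v := by
  rw [fderiv_pi h]
  rfl

lemma Pn_cons (k : ℕ) (b : Fin 3) (m : Fin k → Fin 3) (f : (Fin 3 → ℝ) → ℝ) :
    Pn (k + 1) (Fin.cons b m) f = pd (Pn k m f) b := by
  simp [Pn]

lemma fderiv_jetC {χ : (Fin 3 → ℝ) → (Fin 3 → ℝ)} (hχ : ContDiff ℝ ∞ χ) (n : ℕ)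
    (X : Fin 3 → ℝ) (b : Fin 3) :
    fderiv ℝ (fun X => jetC χ n X) X (Pi.single b 1)
      = (fun (j : Fin n) (m : Fin (j : ℕ) → Fin 3) (α β : Fin 3) =>
          Pn ((j : ℕ) + 1) (Fin.cons b m) (CG χ α β) X) := by
  have hsm : ∀ (j : Fin n) (m : Fin (j : ℕ) → Fin 3) (α β : Fin 3),
      ContDiff ℝ ∞ (fun X => jetC χ n X j m α β) := fun j m α β =>
    Pn_contDiff (CG_contDiff hχ α β) _ m
  have d4 : ∀ (j : Fin n) (m : Fin (j : ℕ) → Fin 3) (α β : Fin 3),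
      DifferentiableAt ℝ (fun X => jetC χ n X j m α β) X := fun j m α β =>
    ((hsm j m α β).differentiable (by simp)) X
  have d3 : ∀ (j : Fin n) (m : Fin (j : ℕ) → Fin 3) (α : Fin 3),
      DifferentiableAt ℝ (fun X => jetC χ n X j m α) X := fun j m α =>
    differentiableAt_pi.2 (d4 j m α)
  have d2 : ∀ (j : Fin n) (m : Fin (j : ℕ) → Fin 3),
      DifferentiableAt ℝ (fun X => jetC χ n X j m) X := fun j m =>
    differentiableAt_pi.2 (d3 j m)
  have d1 : ∀ (j : Fin n), DifferentiableAt ℝ (fun X => jetC χ n X j) X := fun j =>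
    differentiableAt_pi.2 (d2 j)
  funext j m α β
  rw [fderiv_pi_apply' d1, fderiv_pi_apply' (d2 j), fderiv_pi_apply' (d3 j m),
    fderiv_pi_apply' (d4 j m α), Pn_cons]
  rfl

lemma det_contDiff : ContDiff ℝ ∞ (fun c : Fin 3 → Fin 3 → ℝ => (Matrix.of c).det) := by
  have : (fun c : Fin 3 → Fin 3 → ℝ => (Matrix.of c).det)
      = fun c => c 0 0 * c 1 1 * c 2 2 - c 0 0 * c 1 2 * c 2 1 - c 0 1 * c 1 0 * c 2 2
        + c 0 1 * c 1 2 * c 2 0 + c 0 2 * c 1 0 * c 2 1 - c 0 2 * c 1 1 * c 2 0 := by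
    funext c
    rw [Matrix.det_fin_three]
    rfl
  rw [this]
  fun_prop

lemma entry_contDiff (a b : Fin 3) : ContDiff ℝ ∞ (fun c : Fin 3 → Fin 3 → ℝ => c a b) := by
  fun_prop

lemma adjugate_contDiff (a b : Fin 3) :
    ContDiff ℝ ∞ (fun c : Fin 3 → Fin 3 → ℝ => (Matrix.of c).adjugate a b) := by
  fin_cases a <;> fin_cases b <;>
    simp only [Matrix.adjugate_fin_three, Matrix.of_apply] <;>
    simp <;> fun_prop

lemma inv_entry_contDiffOn (a b : Fin 3) :
    ContDiffOn ℝ ∞ (fun c : Fin 3 → Fin 3 → ℝ => (Matrix.of c)⁻¹ a b)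
      {c | (Matrix.of c).det ≠ 0} := by
  have heq : ∀ c : Fin 3 → Fin 3 → ℝ, (Matrix.of c)⁻¹ a b
      = ((Matrix.of c).det)⁻¹ * (Matrix.of c).adjugate a b := by
    intro c
    rw [Matrix.inv_def]
    simp [Ring.inverse_eq_inv']
  refine ContDiffOn.congr ?_ (fun c _ => heq c)
  refine ContDiffOn.mul ?_ ((adjugate_contDiff a b).contDiffOn)
  exact ContDiffOn.inv (det_contDiff.contDiffOn) (fun c hc => hc)

lemma uset_open (n : ℕ) : IsOpen {J : Jet (n+1) | (cMat J).det ≠ 0} := by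
  have : {J : Jet (n+1) | (cMat J).det ≠ 0}
      = (fun J : Jet (n+1) => (cMat J).det) ⁻¹' {x | x ≠ 0} := rfl
  rw [this]
  refine IsOpen.preimage ?_ (isOpen_ne)
  have : Continuous (fun J : Jet (n+1) => (cMat J : Fin 3 → Fin 3 → ℝ)) := by
    refine continuous_pi fun a => continuous_pi fun b => ?_
    exact (jet_eval_contDiff (⟨0, Nat.succ_pos n⟩ : Fin (n+1)) (fun i => i.elim0) a b).continuous
  exact (det_contDiff.continuous).comp this

lemma cMat_jetC (χ : (Fin 3 → ℝ) → (Fin 3 → ℝ)) (n : ℕ) (X : Fin 3 → ℝ) :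
    cMat (jetC χ (n+1) X) = (Fgrad χ X)ᵀ * (Fgrad χ X) := by
  ext a b
  show CG χ a b X = _
  simp [CG, Matrix.mul_apply, Fgrad, Matrix.transpose_apply]

lemma det_cMat_ne {χ : (Fin 3 → ℝ) → (Fin 3 → ℝ)} (hF : ∀ X, IsUnit (Fgrad χ X)) (n : ℕ)
    (X : Fin 3 → ℝ) : (cMat (jetC χ (n+1) X)).det ≠ 0 := by
  rw [cMat_jetC, Matrix.det_mul, Matrix.det_transpose]
  have : IsUnit (Fgrad χ X).det := (Matrix.isUnit_iff_isUnit_det _).1 (hF X)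
  rw [isUnit_iff_ne_zero] at this
  exact mul_ne_zero this this

theorem core : ∀ K : ℕ, ∃ M : Jet (K+1) → Fin 3 → (Fin (K+1) → Fin 3) → ℝ,
    ContDiffOn ℝ ∞ M {J | (cMat J).det ≠ 0} ∧
    ∀ χ : (Fin 3 → ℝ) → (Fin 3 → ℝ), ContDiff ℝ ∞ χ → (∀ X, IsUnit (Fgrad χ X)) →
      ∀ (X : Fin 3 → ℝ) (γ : Fin 3) (m : Fin (K+1) → Fin 3),
        (∑ i, pd (fun Y => χ Y i) γ X * Pn (K+1) m (fun Y => χ Y i) X)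
          = M (jetC χ (K+1) X) γ m := by
  intro K
  induction K with
  | zero =>
    refine ⟨fun J γ m => J ⟨0, Nat.one_pos⟩ (fun i => i.elim0) γ (m 0), ?_, ?_⟩
    · exact contDiffOn_pi.2 fun γ => contDiffOn_pi.2 fun m =>
        (jet_eval_contDiff ⟨0, Nat.one_pos⟩ (fun i => i.elim0) γ (m 0)).contDiffOn
    · intro χ hχ hF X γ m
      show _ = CG χ γ (m 0) X
      simp [CG, Pn]
  | succ K ih =>
    obtain ⟨M, hM, hrep⟩ := ih
    set U' : Set (Jet (K+2)) := {J | (cMat J).det ≠ 0} with hU'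
    -- restriction and shift as continuous linear maps
    set restrictL : Jet (K+2) →L[ℝ] Jet (K+1) := ContinuousLinearMap.pi fun j =>
      ContinuousLinearMap.proj (R := ℝ)
        (φ := fun j : Fin (K+2) => (Fin (j : ℕ) → Fin 3) → Fin 3 → Fin 3 → ℝ)
        j.castSucc with hrL
    have restrictL_apply : ∀ (J : Jet (K+2)) (j : Fin (K+1)), restrictL J j = J j.castSucc :=
      fun J j => rfl
    set shiftL : Fin 3 → (Jet (K+2) →L[ℝ] Jet (K+1)) := fun b => ContinuousLinearMap.pi fun j =>
      ContinuousLinearMap.pi fun mm =>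
        (ContinuousLinearMap.proj (R := ℝ)
            (φ := fun _ : Fin ((j : ℕ)+1) → Fin 3 => Fin 3 → Fin 3 → ℝ)
            (Fin.cons b mm)).comp
          (ContinuousLinearMap.proj (R := ℝ)
            (φ := fun j : Fin (K+2) => (Fin (j : ℕ) → Fin 3) → Fin 3 → Fin 3 → ℝ)
            j.succ) with hsL
    have shiftL_apply : ∀ (b : Fin 3) (J : Jet (K+2)) (j : Fin (K+1))
        (mm : Fin (j : ℕ) → Fin 3), shiftL b J j mm = J j.succ (Fin.cons b mm) :=
      fun b J j mm => rfl
    have hrmaps : Set.MapsTo restrictL U' {J : Jet (K+1) | (cMat J).det ≠ 0} := by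
      intro J hJ
      show (cMat (restrictL J)).det ≠ 0
      have : cMat (restrictL J) = cMat J := rfl
      rw [this]; exact hJ
    refine ⟨fun J γ m =>
      fderiv ℝ M (restrictL J) (shiftL (m 0) J) γ (Fin.tail m)
      - ∑ μ, ∑ ν, ((J ⟨1, by omega⟩ (fun _ => m 0) γ μ + J ⟨1, by omega⟩ (fun _ => γ) (m 0) μ
          - J ⟨1, by omega⟩ (fun _ => μ) (m 0) γ) / 2)
        * ((cMat J)⁻¹ μ ν) * M (restrictL J) ν (Fin.tail m), ?_, ?_⟩
    · -- smoothness
      refine contDiffOn_pi.2 fun γ => contDiffOn_pi.2 fun m => ContDiffOn.sub ?_ ?_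
      · have h1 : ContDiffOn ℝ ∞ (fun J : Jet (K+2) => fderiv ℝ M (restrictL J)) U' :=
          (hM.fderiv_of_isOpen (uset_open K) (le_refl _)).comp
            (restrictL.contDiff.contDiffOn) hrmaps
        have h2 := h1.clm_apply ((shiftL (m 0)).contDiff.contDiffOn)
        exact (((ContinuousLinearMap.proj (R := ℝ) (φ := fun _ : Fin (K+1) → Fin 3 => ℝ)
          (Fin.tail m)).comp (ContinuousLinearMap.proj (R := ℝ)
            (φ := fun _ : Fin 3 => (Fin (K+1) → Fin 3) → ℝ) γ)).contDiff).comp_contDiffOn h2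
      · refine ContDiffOn.sum fun μ _ => ContDiffOn.sum fun ν _ => ContDiffOn.mul
          (ContDiffOn.mul ?_ ?_) ?_
        · exact ((((jet_eval_contDiff ⟨1, by omega⟩ (fun _ => m 0) γ μ).contDiffOn.add
            (jet_eval_contDiff ⟨1, by omega⟩ (fun _ => γ) (m 0) μ).contDiffOn).sub
            (jet_eval_contDiff ⟨1, by omega⟩ (fun _ => μ) (m 0) γ).contDiffOn).div_const 2)
        · have hc : ContDiff ℝ ∞ (fun J : Jet (K+2) => (fun a b => cMat J a b)) :=
            contDiff_pi.2 fun a => contDiff_pi.2 fun b =>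
              jet_eval_contDiff ⟨0, Nat.succ_pos _⟩ (fun i => i.elim0) a b
          have := (inv_entry_contDiffOn μ ν).comp hc.contDiffOn
            (fun J hJ => hJ)
          exact this
        · exact (((ContinuousLinearMap.proj (R := ℝ) (φ := fun _ : Fin (K+1) → Fin 3 => ℝ)
            (Fin.tail m)).comp (ContinuousLinearMap.proj (R := ℝ)
              (φ := fun _ : Fin 3 => (Fin (K+1) → Fin 3) → ℝ) ν)).contDiff).comp_contDiffOn
            (hM.comp (restrictL.contDiff.contDiffOn) hrmaps)
    · -- representation
      intro χ hχ hF X γ m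
      have hχi : ∀ i : Fin 3, ContDiff ℝ ∞ (fun Y => χ Y i) := comp_contDiff hχ
      have hd1 : ∀ (i a : Fin 3), DifferentiableAt ℝ (pd (fun Y => χ Y i) a) X :=
        fun i a => ((pd_contDiff (hχi i) a).differentiable (by simp)) X
      have hdP : ∀ (i : Fin 3) (k : ℕ) (mm : Fin k → Fin 3),
          DifferentiableAt ℝ (Pn k mm (fun Y => χ Y i)) X :=
        fun i k mm => ((Pn_contDiff (hχi i) k mm).differentiable (by simp)) X
      have hA : (∑ i, pd (fun Y => χ Y i) γ X * Pn (K+2) m (fun Y => χ Y i) X)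
          = pd (fun Y => ∑ i, pd (fun Y' => χ Y' i) γ Y
                * Pn (K+1) (Fin.tail m) (fun Y' => χ Y' i) Y) (m 0) X
            - ∑ i, pd (pd (fun Y => χ Y i) γ) (m 0) X
                * Pn (K+1) (Fin.tail m) (fun Y => χ Y i) X := by
        rw [pd_sum (f := fun i Y => pd (fun Y' => χ Y' i) γ Y * Pn (K+1) (Fin.tail m) (fun Y' => χ Y' i) Y)
          Finset.univ (fun i _ => (hd1 i γ).mul (hdP i (K+1) (Fin.tail m))) (m 0)]
        have he : ∀ i : Fin 3, pd (fun Y => pd (fun Y' => χ Y' i) γ Y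
              * Pn (K+1) (Fin.tail m) (fun Y' => χ Y' i) Y) (m 0) X
            = pd (pd (fun Y => χ Y i) γ) (m 0) X * Pn (K+1) (Fin.tail m) (fun Y => χ Y i) X
              + pd (fun Y => χ Y i) γ X * Pn (K+2) m (fun Y => χ Y i) X := by
          intro i
          rw [pd_mul (hd1 i γ) (hdP i (K+1) (Fin.tail m)) (m 0)]
          rfl
        rw [Finset.sum_congr rfl fun i _ => he i, Finset.sum_add_distrib]
        ring
      have hfun : (fun Y => ∑ i, pd (fun Y' => χ Y' i) γ Y
            * Pn (K+1) (Fin.tail m) (fun Y' => χ Y' i) Y)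
          = fun Y => M (jetC χ (K+1) Y) γ (Fin.tail m) :=
        funext fun Y => hrep χ hχ hF Y γ (Fin.tail m)
      have hmem : jetC χ (K+1) X ∈ {J : Jet (K+1) | (cMat J).det ≠ 0} := det_cMat_ne hF K X
      have hjd : DifferentiableAt ℝ (fun Y => jetC χ (K+1) Y) X :=
        ((jetC_contDiff hχ (K+1)).differentiable (by simp)) X
      have hMd : DifferentiableAt ℝ M (jetC χ (K+1) X) :=
        (hM.contDiffAt ((uset_open K).mem_nhds hmem)).differentiableAt (by simp)
      have hMg : DifferentiableAt ℝ (fun Y => M (jetC χ (K+1) Y)) X := hMd.comp X hjd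
      have l1 : ∀ γ', DifferentiableAt ℝ (fun Y => M (jetC χ (K+1) Y) γ') X :=
        fun γ' => differentiableAt_pi.1 hMg γ'
      have l2 : ∀ γ' mm, DifferentiableAt ℝ (fun Y => M (jetC χ (K+1) Y) γ' mm) X :=
        fun γ' mm => differentiableAt_pi.1 (l1 γ') mm
      have hB : pd (fun Y => M (jetC χ (K+1) Y) γ (Fin.tail m)) (m 0) X
          = fderiv ℝ M (jetC χ (K+1) X) (shiftL (m 0) (jetC χ (K+2) X)) γ (Fin.tail m) := by
        have e1 : pd (fun Y => M (jetC χ (K+1) Y) γ (Fin.tail m)) (m 0) X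
            = fderiv ℝ (fun Y => M (jetC χ (K+1) Y)) X (Pi.single (m 0) 1) γ (Fin.tail m) := by
          rw [fderiv_pi_apply' l1, fderiv_pi_apply' (fun mm => l2 γ mm)]
          rfl
        have e2 : fderiv ℝ (fun Y => M (jetC χ (K+1) Y)) X (Pi.single (m 0) 1)
            = fderiv ℝ M (jetC χ (K+1) X)
                (fderiv ℝ (fun Y => jetC χ (K+1) Y) X (Pi.single (m 0) 1)) := by
          rw [show (fun Y => M (jetC χ (K+1) Y)) = M ∘ (fun Y => jetC χ (K+1) Y) from rfl,
            fderiv_comp X hMd hjd]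
          rfl
        have e3 : fderiv ℝ (fun Y => jetC χ (K+1) Y) X (Pi.single (m 0) 1)
            = shiftL (m 0) (jetC χ (K+2) X) := by
          rw [fderiv_jetC hχ (K+1) X (m 0)]
          funext j mm a b
          rw [shiftL_apply]
          rfl
        rw [e1, e2, e3]
      have hC : ∑ i, pd (pd (fun Y => χ Y i) γ) (m 0) X
            * Pn (K+1) (Fin.tail m) (fun Y => χ Y i) X
          = ∑ μ, ∑ ν, (∑ i, pd (fun Y => χ Y i) μ X * pd (pd (fun Y => χ Y i) γ) (m 0) X)
              * ((cMat (jetC χ (K+2) X))⁻¹ μ ν)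
              * (∑ i, pd (fun Y => χ Y i) ν X
                  * Pn (K+1) (Fin.tail m) (fun Y => χ Y i) X) := by
        have hmc := matrix_contract (Fgrad χ X) (hF X)
          (fun i => Pn (K+1) (Fin.tail m) (fun Y => χ Y i) X)
          (fun i => pd (pd (fun Y => χ Y i) γ) (m 0) X)
        rw [cMat_jetC χ (K+1) X]
        exact hmc
      have hD : ∀ μ : Fin 3,
          (∑ i, pd (fun Y => χ Y i) μ X * pd (pd (fun Y => χ Y i) γ) (m 0) X)
          = ((jetC χ (K+2) X) ⟨1, by omega⟩ (fun _ => m 0) γ μ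
            + (jetC χ (K+2) X) ⟨1, by omega⟩ (fun _ => γ) (m 0) μ
            - (jetC χ (K+2) X) ⟨1, by omega⟩ (fun _ => μ) (m 0) γ) / 2 := by
        intro μ
        rw [koszul hχ μ (m 0) γ X]
        rfl
      have hE : ∀ ν, (∑ i, pd (fun Y => χ Y i) ν X
            * Pn (K+1) (Fin.tail m) (fun Y => χ Y i) X)
          = M (restrictL (jetC χ (K+2) X)) ν (Fin.tail m) := by
        intro ν
        rw [show restrictL (jetC χ (K+2) X) = jetC χ (K+1) X from rfl]
        exact hrep χ hχ hF X ν (Fin.tail m)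
      rw [hA, hfun, hB, hC]
      beta_reduce
      rw [show restrictL (jetC χ (K+2) X) = jetC χ (K+1) X from rfl]
      congr 1
      refine Finset.sum_congr rfl fun μ _ => Finset.sum_congr rfl fun ν _ => ?_
      rw [hD μ, hE ν, show restrictL (jetC χ (K+2) X) = jetC χ (K+1) X from rfl]

lemma iteratedFDeriv_CGfun {χ : (Fin 3 → ℝ) → (Fin 3 → ℝ)} (hχ : ContDiff ℝ ∞ χ) (k : ℕ)
    (m : Fin k → Fin 3) (X : Fin 3 → ℝ) (α β : Fin 3) :
    iteratedFDeriv ℝ k (CGfun χ) X (fun q => Pi.single (m q) 1) α β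
      = Pn k m (CG χ α β) X := by
  set g : (Fin 3 → Fin 3 → ℝ) →L[ℝ] ℝ :=
    (ContinuousLinearMap.proj (R := ℝ) (φ := fun _ : Fin 3 => ℝ) β).comp
      (ContinuousLinearMap.proj (R := ℝ) (φ := fun _ : Fin 3 => Fin 3 → ℝ) α) with hg
  have h := ContinuousLinearMap.iteratedFDeriv_comp_left g ((CGfun_contDiff hχ).contDiffAt (x := X))
    (i := k) (by exact_mod_cast le_top)
  have h2 : iteratedFDeriv ℝ k (CGfun χ) X (fun q => Pi.single (m q) 1) α β
      = iteratedFDeriv ℝ k (g ∘ CGfun χ) X (fun q => Pi.single (m q) 1) := by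
    rw [h]
    rfl
  rw [h2, show g ∘ CGfun χ = CG χ α β from rfl]
  exact iteratedFDeriv_basis (CG_contDiff hχ α β) k m X

/-- Representation of placement higher-order derivatives (Piola's conjecture proved by
induction): for each n ≥ 2 there is a universal function Mₙ of (C, ∇C, …, ∇ⁿ⁻¹C) such
that Σᵢ (∂χⁱ/∂X^γ)(∂ⁿχⁱ/∂X^{α₁}⋯∂X^{αₙ}) = Mₙ(C(X),…,∇ⁿ⁻¹C(X))_{γα₁…αₙ}
for every smooth χ with everywhere invertible deformation gradient. -/
theorem piola_representation_higher_derivatives (n : ℕ) (hn : 2 ≤ n) :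
    ∃ M : (Fin 3 → Fin 3 → ℝ) →
        ((k : Fin (n - 1)) →
          ContinuousMultilinearMap ℝ (fun _ : Fin (k.1 + 1) => (Fin 3 → ℝ))
            (Fin 3 → Fin 3 → ℝ)) →
        Fin 3 → (Fin n → Fin 3) → ℝ,
      ∀ χ : (Fin 3 → ℝ) → (Fin 3 → ℝ), ContDiff ℝ (⊤ : ℕ∞) χ →
        (∀ X, IsUnit (Fgrad χ X)) →
        ∀ (X : Fin 3 → ℝ) (γ : Fin 3) (αs : Fin n → Fin 3),
          ∑ i, pd (fun Y => χ Y i) γ X *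
              iteratedFDeriv ℝ n (fun Y => χ Y i) X (fun k => Pi.single (αs k) 1)
            = M (CGfun χ X)
                (fun k => iteratedFDeriv ℝ (k.1 + 1) (CGfun χ) X) γ αs := by
  obtain ⟨N, rfl⟩ : ∃ N, n = N + 2 := ⟨n - 2, by omega⟩
  obtain ⟨Mc, hMc, hrep⟩ := core (N+1)
  refine ⟨fun c D γ αs => Mc (fun j =>
    Fin.cases (motive := fun j : Fin (N+2) => (Fin (j : ℕ) → Fin 3) → Fin 3 → Fin 3 → ℝ)
      (fun _ a b => c a b)
      (fun (j' : Fin (N+1)) (mm : Fin ((j' : ℕ)+1) → Fin 3) a b =>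
        D j' (fun q => Pi.single (mm q) 1) a b) j) γ αs, ?_⟩
  intro χ hχ hF X γ αs
  have hχ' : ContDiff ℝ ∞ χ := hχ.of_le (by simp)
  have hjet : (fun j : Fin (N+2) =>
      Fin.cases (motive := fun j : Fin (N+2) => (Fin (j : ℕ) → Fin 3) → Fin 3 → Fin 3 → ℝ)
        (fun _ a b => CGfun χ X a b)
        (fun (j' : Fin (N+1)) (mm : Fin ((j' : ℕ)+1) → Fin 3) a b =>
          iteratedFDeriv ℝ ((j' : ℕ) + 1) (CGfun χ) X (fun q => Pi.single (mm q) 1) a b) j)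
      = jetC χ (N+2) X := by
    funext j
    induction j using Fin.cases with
    | zero =>
      simp only [Fin.cases_zero]
      rfl
    | succ j' =>
      simp only [Fin.cases_succ]
      funext mm a b
      exact iteratedFDeriv_CGfun hχ' ((j' : ℕ) + 1) mm X a b
  have hL : ∀ i : Fin 3,
      iteratedFDeriv ℝ (N+2) (fun Y => χ Y i) X (fun k => Pi.single (αs k) 1)
        = Pn (N+2) αs (fun Y => χ Y i) X :=
    fun i => iteratedFDeriv_basis (comp_contDiff hχ' i) (N+2) αs X
  calc ∑ i, pd (fun Y => χ Y i) γ X *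
        iteratedFDeriv ℝ (N+2) (fun Y => χ Y i) X (fun k => Pi.single (αs k) 1)
      = ∑ i, pd (fun Y => χ Y i) γ X * Pn (N+2) αs (fun Y => χ Y i) X := by
        exact Finset.sum_congr rfl fun i _ => by rw [hL i]
    _ = Mc (jetC χ (N+2) X) γ αs := hrep χ hχ' hF X γ αs
    _ = _ := by
        beta_reduce
        rw [hjet]
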